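/- Let α > 1, σ > 0, k > 0, c := σ/(αk), f(R) := √(1 + 4c/R + c²/R²) and θ₊(R) := (2 + c/R + f(R))/(3α). Then the linearized elastic energy term P^{el}_{k,R}(θ₊(R)) := kR³θ₊(R)(αθ₊(R) − 1)² satisfies P^{el}_{k,R}(θ₊(R)) = (σ²/(α³k))·R + o(R) as R → +∞; equivalently, lim_{R→∞} kR²θ₊(R)(αθ₊(R) − 1)² = σ²/(α³k). -/

import Mathlib

open Filter

noncomputable section

/-- The discriminant factor `f(R) = √(1 + 4c/R + c²/R²)`. -/
def fdisc (c R : ℝ) : ℝ := Real.sqrt (1 + 4*c/R + c^2/R^2)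

/-- The critical point `θ₊(R) = (2 + c/R + f(R))/(3α)`. -/
def θplus (α c R : ℝ) : ℝ := (2 + c/R + fdisc c R) / (3*α)

/-- The critical point `θ₋(R) = (2 + c/R − f(R))/(3α)`. -/
def θminus (α c R : ℝ) : ℝ := (2 + c/R - fdisc c R) / (3*α)

/-- The total energy polynomial `P_{k,R}(θ) = kR³θ(αθ−1)² + σR²(1−θ²)`. -/
def Ptot (α σ k R θ : ℝ) : ℝ := k*R^3*θ*(α*θ - 1)^2 + σ*R^2*(1 - θ^2)

/-!
As `R → ∞`, `θ₊(R) → 1/α`, while `αθ₊(R) − 1 = (c/R + f(R) − 1)/3` is of order `1/R`: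
rationalizing, `R(f(R) − 1) = (4c + c²/R)/(f(R) + 1) → 2c`, so `R(αθ₊(R) − 1) → c`.
Hence `kR²θ₊(R)(αθ₊(R) − 1)² = kθ₊(R)(R(αθ₊(R) − 1))² → kc²/α`, which is `σ²/(α³k)`
for `c = σ/(αk)`.
-/

open Topology

variable {α : ℝ}

lemma tendsto_fdisc_radicand (c : ℝ) :
    Tendsto (fun R : ℝ => 1 + 4*c/R + c^2/R^2) atTop (𝓝 1) := by
  have h4c : Tendsto (fun R : ℝ => 4*c/R) atTop (𝓝 0) :=
    tendsto_const_nhds.div_atTop tendsto_id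
  have hc2 : Tendsto (fun R : ℝ => c^2/R^2) atTop (𝓝 0) :=
    tendsto_const_nhds.div_atTop (tendsto_pow_atTop two_ne_zero)
  simpa using (tendsto_const_nhds.add h4c).add hc2

lemma tendsto_fdisc (c : ℝ) : Tendsto (fdisc c) atTop (𝓝 1) := by
  have h := (tendsto_fdisc_radicand c).sqrt
  rwa [Real.sqrt_one] at h

lemma mul_fdisc_sub_one_eventuallyEq (c : ℝ) :
    (fun R => R * (fdisc c R - 1)) =ᶠ[atTop] fun R => (4*c + c^2/R) / (fdisc c R + 1) := by
  filter_upwards [eventually_gt_atTop 0,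
    (tendsto_fdisc_radicand c).eventually (eventually_ge_nhds zero_lt_one)] with R hR hrad
  have hsq : fdisc c R ^ 2 = 1 + 4*c/R + c^2/R^2 := Real.sq_sqrt (by linarith)
  have hpos : 0 < fdisc c R + 1 := by unfold fdisc; positivity
  rw [eq_div_iff hpos.ne']
  calc R * (fdisc c R - 1) * (fdisc c R + 1) = R * (fdisc c R ^ 2 - 1) := by ring
    _ = 4*c + c^2/R := by rw [hsq]; field_simp; ring

lemma tendsto_mul_fdisc_sub_one (c : ℝ) :
    Tendsto (fun R => R * (fdisc c R - 1)) atTop (𝓝 (2*c)) := by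
  have hnum : Tendsto (fun R : ℝ => 4*c + c^2/R) atTop (𝓝 (4*c)) := by
    simpa using tendsto_const_nhds.add ((tendsto_const_nhds (x := c^2)).div_atTop tendsto_id)
  have hquot := hnum.div ((tendsto_fdisc c).add_const 1) (by norm_num)
  refine Tendsto.congr' (mul_fdisc_sub_one_eventuallyEq c).symm ?_
  convert hquot using 2
  norm_num
  ring

lemma tendsto_θplus (hα : α ≠ 0) (c : ℝ) : Tendsto (θplus α c) atTop (𝓝 α⁻¹) := by
  have hsum : Tendsto (fun R => 2 + c/R + fdisc c R) atTop (𝓝 (2 + 0 + 1)) :=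
    (tendsto_const_nhds.add (tendsto_const_nhds.div_atTop tendsto_id)).add (tendsto_fdisc c)
  have hlim : (2 + 0 + 1) / (3*α) = α⁻¹ := by field_simp; norm_num
  exact hlim ▸ hsum.div_const (3*α)

lemma mul_sub_one_θplus (hα : α ≠ 0) {c R : ℝ} (hR : R ≠ 0) :
    R * (α * θplus α c R - 1) = (c + R * (fdisc c R - 1)) / 3 := by
  unfold θplus
  field_simp
  ring

lemma tendsto_mul_sub_one_θplus (hα : α ≠ 0) (c : ℝ) :
    Tendsto (fun R => R * (α * θplus α c R - 1)) atTop (𝓝 c) := by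
  have hlim : Tendsto (fun R => (c + R * (fdisc c R - 1)) / 3) atTop (𝓝 ((c + 2*c) / 3)) :=
    (tendsto_const_nhds.add (tendsto_mul_fdisc_sub_one c)).div_const 3
  rw [show (c + 2*c) / 3 = c by ring] at hlim
  refine Tendsto.congr' ?_ hlim
  filter_upwards [eventually_ne_atTop 0] with R hR
  exact (mul_sub_one_θplus hα hR).symm

lemma tendsto_elastic_energy_div_R (hα : α ≠ 0) (k c : ℝ) :
    Tendsto (fun R => k * R^2 * θplus α c R * (α * θplus α c R - 1)^2) atTop
      (𝓝 (k * α⁻¹ * c^2)) := by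
  have h := (tendsto_const_nhds (x := k)).mul (tendsto_θplus hα c) |>.mul
    ((tendsto_mul_sub_one_θplus hα c).pow 2)
  refine h.congr fun R => ?_
  ring

theorem elastic_part_linear_growth_general (α σ k : ℝ) (hα : 1 < α) (hk : 0 < k) :
    Tendsto (fun R : ℝ =>
        k * R^2 * θplus α (σ/(α*k)) R * (α * θplus α (σ/(α*k)) R - 1)^2)
      atTop (nhds (σ^2 / (α^3 * k))) := by
  have hα0 : α ≠ 0 := by positivity
  convert tendsto_elastic_energy_div_R hα0 k (σ/(α*k)) using 2
  field_simp

/-- the linearized elastic energy at the minimizer satisfies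
`P^{el}_{k,R}(θ₊(R)) = (σ²/(α³k))R + o(R)`, i.e.
`kR²θ₊(R)(αθ₊(R) − 1)² → σ²/(α³k)` as `R → +∞`. -/
theorem elastic_part_linear_growth (α σ k : ℝ) (hα : 1 < α) (hσ : 0 < σ) (hk : 0 < k) :
    Tendsto (fun R : ℝ =>
        k * R^2 * θplus α (σ/(α*k)) R * (α * θplus α (σ/(α*k)) R - 1)^2)
      atTop (nhds (σ^2 / (α^3 * k))) :=
  elastic_part_linear_growth_general α σ k hα hk
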